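/- arXiv:math/0608006 — 2 statements merged into one kernel-verified Lean document; each statement's English description precedes it below -/
import Mathlib

section
/- For every real alternating 2-form A on a finite-dimensional Euclidean vector space and every μ ≥ 1, the comass of the wedge power A^μ satisfies ‖A^μ‖ ≤ μ!·‖A‖^μ. -/
noncomputable section
open scoped BigOperators

variable {V : Type*} [NormedAddCommGroup V] [InnerProductSpace ℝ V]

def idx0 {μ : ℕ} (i : Fin μ) : Fin (2*μ) := ⟨2*i.1, by have := i.2; omega⟩
def idx1 {μ : ℕ} (i : Fin μ) : Fin (2*μ) := ⟨2*i.1+1, by have := i.2; omega⟩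

/-- Evaluation of the `μ`-th wedge power `A^μ` of an alternating 2-form `A` on the
`2μ`-tuple `v`, via the permutation (Pfaffian) formula. -/
def wpowEval (A : AlternatingMap ℝ V ℝ (Fin 2)) (μ : ℕ) (v : Fin (2*μ) → V) : ℝ :=
  (1/2^μ : ℝ) * ∑ σ : Equiv.Perm (Fin (2*μ)),
    ((Equiv.Perm.sign σ : ℤ) : ℝ) *
      ∏ i : Fin μ, A ![v (σ (idx0 i)), v (σ (idx1 i))]

/-- The comass of the 2-form `A`: the supremum of its values on orthonormal pairs. -/
def comass2 (A : AlternatingMap ℝ V ℝ (Fin 2)) : ℝ :=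
  sSup {x : ℝ | ∃ v : Fin 2 → V, Orthonormal ℝ v ∧ x = A v}

/-- The comass of the wedge power `A^μ`: the supremum of its values on orthonormal
`2μ`-tuples. -/
def comassPow (A : AlternatingMap ℝ V ℝ (Fin 2)) (μ : ℕ) : ℝ :=
  sSup {x : ℝ | ∃ v : Fin (2*μ) → V, Orthonormal ℝ v ∧ x = wpowEval A μ v}

set_option linter.unusedSectionVars false
set_option maxHeartbeats 1000000

open scoped RealInnerProductSpace
open Module

lemma upd0 (x y z : V) : Function.update ![x,y] 0 z = ![z,y] := by
  funext i; fin_cases i <;> simp [Function.update]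

lemma upd1 (x y z : V) : Function.update ![x,y] 1 z = ![x,z] := by
  funext i; fin_cases i <;> simp [Function.update]

lemma vec2_eta (v : Fin 2 → V) : ![v 0, v 1] = v := by
  funext i; fin_cases i <;> simp

def Abil (A : AlternatingMap ℝ V ℝ (Fin 2)) : V →ₗ[ℝ] V →ₗ[ℝ] ℝ :=
  LinearMap.mk₂ ℝ (fun x y => A ![x,y])
    (fun x x' y => by
      show A ![x + x', y] = A ![x,y] + A ![x',y]
      rw [← upd0 x y (x+x'), A.map_update_add, upd0, upd0])
    (fun c x y => by
      show A ![c • x, y] = c • A ![x,y]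
      rw [← upd0 x y (c • x), A.map_update_smul, upd0])
    (fun x y y' => by
      show A ![x, y + y'] = A ![x,y] + A ![x,y']
      rw [← upd1 x y (y+y'), A.map_update_add, upd1, upd1])
    (fun c x y => by
      show A ![x, c • y] = c • A ![x,y]
      rw [← upd1 x y (c • y), A.map_update_smul, upd1])

@[simp] lemma Abil_apply (A : AlternatingMap ℝ V ℝ (Fin 2)) (x y : V) :
    Abil A x y = A ![x,y] := rfl

lemma Abil_skew (A : AlternatingMap ℝ V ℝ (Fin 2)) (x y : V) :
    A ![y,x] = - A ![x,y] := by
  have h : ![x,y] ∘ Equiv.swap 0 1 = ![y,x] := by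
    funext i; fin_cases i <;> simp
  rw [← h, A.map_swap _ (by decide : (0:Fin 2) ≠ 1)]


lemma A_addL (A : AlternatingMap ℝ V ℝ (Fin 2)) (x x' y : V) :
    A ![x + x', y] = A ![x,y] + A ![x',y] := by
  rw [← Abil_apply, map_add, LinearMap.add_apply, Abil_apply, Abil_apply]

lemma A_smulL (A : AlternatingMap ℝ V ℝ (Fin 2)) (c : ℝ) (x y : V) :
    A ![c • x, y] = c * A ![x,y] := by
  rw [← Abil_apply, map_smul, LinearMap.smul_apply, smul_eq_mul, Abil_apply]

lemma A_addR (A : AlternatingMap ℝ V ℝ (Fin 2)) (x y y' : V) :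
    A ![x, y + y'] = A ![x,y] + A ![x,y'] := by
  rw [← Abil_apply, map_add, Abil_apply, Abil_apply]

lemma A_smulR (A : AlternatingMap ℝ V ℝ (Fin 2)) (c : ℝ) (x y : V) :
    A ![x, c • y] = c * A ![x,y] := by
  rw [← Abil_apply, map_smul, smul_eq_mul, Abil_apply]

lemma orthonormal_pair {x y : V} (hx : ‖x‖ = 1) (hy : ‖y‖ = 1)
    (hxy : ⟪x, y⟫ = 0) : Orthonormal ℝ ![x,y] := by
  constructor
  · intro i; fin_cases i <;> simpa
  · intro i j hij
    fin_cases i <;> fin_cases j <;>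
      simp_all [real_inner_comm x y]

lemma normalForm [FiniteDimensional ℝ V] (A : AlternatingMap ℝ V ℝ (Fin 2)) :
    ∀ (n : ℕ) (W : Submodule ℝ V), finrank ℝ W = 2*n →
      ∃ f : Fin (2*n) → V, Orthonormal ℝ f ∧ (∀ i, f i ∈ W) ∧
        ∀ j k : Fin (2*n), j.1/2 ≠ k.1/2 → A ![f j, f k] = 0 := by
  intro n
  induction n with
  | zero =>
    intro W _
    exact ⟨Fin.elim0, ⟨fun i => i.elim0, fun i => i.elim0⟩, fun i => i.elim0,
      fun j => j.elim0⟩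
  | succ n ih =>
    intro W hW
    -- the bilinear form on W and its representing skew operator T
    set Bw : ↥W →ₗ[ℝ] ↥W →ₗ[ℝ] ℝ := (Abil A).compl₁₂ W.subtype W.subtype with hBw
    set T : ↥W →ₗ[ℝ] ↥W :=
      ((InnerProductSpace.toDual ℝ ↥W).symm.toLinearEquiv.toLinearMap.comp
        (LinearMap.toContinuousLinearMap.toLinearMap)).comp Bw with hTdef
    have hT : ∀ x y : ↥W, ⟪T x, y⟫ = A ![(x:V), (y:V)] := by
      intro x y
    -- ⟪T x, y⟫ = (Bw x) y
      have : ⟪T x, y⟫ = (LinearMap.toContinuousLinearMap (Bw x)) y := by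
        simp only [hTdef, LinearMap.comp_apply, LinearEquiv.coe_toLinearMap]
        exact InnerProductSpace.toDual_symm_apply
      simpa [Bw] using this
    have hskew : ∀ x y : ↥W, ⟪T x, y⟫ = -⟪T y, x⟫ := by
      intro x y; rw [hT, hT, Abil_skew]
    by_cases hT0 : T = 0
    · -- A vanishes on W; any orthonormal basis works
      have b := (stdOrthonormalBasis ℝ ↥W).reindex (finCongr (hW.symm ▸ rfl : finrank ℝ ↥W = 2*(n+1)))
      refine ⟨fun i => (b i : V), ?_, fun i => (b i).2, ?_⟩
      · exact b.orthonormal.comp_linearIsometry W.subtypeₗᵢ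
      · intro j k _
        rw [← hT (b j) (b k), hT0]; simp
    · -- T ≠ 0
      set S : ↥W →ₗ[ℝ] ↥W := -(T.comp T) with hSdef
      have hSx : ∀ x : ↥W, S x = -(T (T x)) := fun x => rfl
      have hS_inner : ∀ x y : ↥W, ⟪S x, y⟫ = ⟪T x, T y⟫ := by
        intro x y
        rw [hSx, inner_neg_left, hskew (T x) y, neg_neg, real_inner_comm]
      have hSsym : S.IsSymmetric := by
        intro x y
        rw [hS_inner, real_inner_comm (S y) x, hS_inner, real_inner_comm]
      have hS0 : S ≠ 0 := by
        intro h
        apply hT0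
        ext x
        have : ⟪T x, T x⟫ = 0 := by rw [← hS_inner, h]; simp
        simpa using inner_self_eq_zero.mp this
      have hdim : finrank ℝ ↥W = 2*(n+1) := hW
      obtain ⟨e, γ, hei⟩ : ∃ (e : OrthonormalBasis (Fin (2*(n+1))) ℝ ↥W) (γ : Fin (2*(n+1)) → ℝ),
          ∀ i, S (e i) = γ i • e i :=
        ⟨hSsym.eigenvectorBasis hdim, fun i => hSsym.eigenvalues hdim i,
          fun i => hSsym.apply_eigenvectorBasis hdim i⟩
      obtain ⟨i₀, hs⟩ : ∃ i, γ i ≠ 0 := by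
        by_contra h
        push_neg at h
        apply hS0
        apply e.toBasis.ext
        intro i
        rw [OrthonormalBasis.coe_toBasis, hei, h]
        simp
      set u : ↥W := e i₀ with hu
      have hu_norm : ‖u‖ = 1 := e.orthonormal.1 i₀
      set s : ℝ := γ i₀ with hs'
      have hSu : S u = s • u := hei i₀
      have hTuTu : ⟪T u, T u⟫ = s := by
        rw [← hS_inner, hSu, real_inner_smul_left, real_inner_self_eq_norm_sq, hu_norm]
        ring
      have hTu0 : T u ≠ 0 := by
        intro h; rw [h] at hTuTu; simp at hTuTu; exact hs hTuTu.symm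
      set r : ℝ := ‖T u‖ with hr'
      have hr0 : 0 < r := norm_pos_iff.mpr hTu0
      set w : ↥W := r⁻¹ • T u with hwdef
      have hw_norm : ‖w‖ = 1 := by
        rw [hwdef, norm_smul, norm_inv, Real.norm_eq_abs, abs_of_pos hr0, ← hr']
        field_simp
      have hTu_eq : T u = r • w := by
        rw [hwdef, smul_smul, mul_inv_cancel₀ (ne_of_gt hr0), one_smul]
      have h_uw : ⟪u, w⟫ = 0 := by
        rw [hwdef, real_inner_smul_right, real_inner_comm, hT]
        rw [A.map_eq_zero_of_eq ![(u:V), (u:V)] (by simp) (by decide : (0 : Fin 2) ≠ 1)]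
        ring
      have hTw : T w = (-(s * r⁻¹)) • u := by
        rw [hwdef, map_smul]
        have : T (T u) = -(S u) := by rw [hSx]; simp
        rw [this, hSu]
        module
      -- the orthogonal complement of span {u, w} inside W
      have hon_uw : Orthonormal ℝ ![u, w] := orthonormal_pair hu_norm hw_norm h_uw
      set U : Submodule ℝ ↥W := Submodule.span ℝ (Set.range ![u, w]) with hUdef
      have hu_mem : u ∈ U := Submodule.subset_span ⟨0, rfl⟩
      have hw_mem : w ∈ U := Submodule.subset_span ⟨1, rfl⟩
      have hU_dim : finrank ℝ ↥U = 2 := by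
        rw [finrank_span_eq_card hon_uw.linearIndependent]
        simp
      have hK_dim : finrank ℝ ↥(Uᗮ) = 2*n := by
        have := U.finrank_add_finrank_orthogonal
        rw [hU_dim, hdim] at this
        omega
      set W' : Submodule ℝ V := Uᗮ.map W.subtype with hW'def
      have hW'_dim : finrank ℝ ↥W' = 2*n := by
        rw [hW'def, Submodule.finrank_map_subtype_eq]; exact hK_dim
      obtain ⟨f', hon', hmem', hzero'⟩ := ih W' hW'_dim
      -- facts about members of W'
      have hmemW' : ∀ k, ∃ y : ↥W, y ∈ Uᗮ ∧ (y : V) = f' k := by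
        intro k
        obtain ⟨y, hy, hy'⟩ := hmem' k
        exact ⟨y, hy, hy'⟩
      have h_u_f' : ∀ k, ⟪(u:V), f' k⟫ = 0 := by
        intro k
        obtain ⟨y, hy, hy'⟩ := hmemW' k
        rw [← hy']
        exact (Submodule.mem_orthogonal U y).mp hy u hu_mem
      have h_w_f' : ∀ k, ⟪(w:V), f' k⟫ = 0 := by
        intro k
        obtain ⟨y, hy, hy'⟩ := hmemW' k
        rw [← hy']
        exact (Submodule.mem_orthogonal U y).mp hy w hw_mem
      have hA_u_f' : ∀ k, A ![(u:V), f' k] = 0 := by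
        intro k
        obtain ⟨y, hy, hy'⟩ := hmemW' k
        rw [← hy', ← hT u y, hTu_eq, real_inner_smul_left]
        have : ⟪w, y⟫ = 0 := (Submodule.mem_orthogonal U y).mp hy w hw_mem
        rw [this]; ring
      have hA_w_f' : ∀ k, A ![(w:V), f' k] = 0 := by
        intro k
        obtain ⟨y, hy, hy'⟩ := hmemW' k
        rw [← hy', ← hT w y, hTw, real_inner_smul_left]
        have : ⟪u, y⟫ = 0 := (Submodule.mem_orthogonal U y).mp hy u hu_mem
        rw [this]; ring
      -- assemble the new family
      set g : Fin (2*(n+1)) → V := fun j =>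
        if h : j.1 < 2 then (if j.1 = 0 then (u:V) else (w:V))
        else f' ⟨j.1 - 2, by have := j.2; omega⟩ with hg
      have hcase : ∀ j : Fin (2*(n+1)), j.1 = 0 ∨ j.1 = 1 ∨
          ∃ k : Fin (2*n), j.1 = k.1 + 2 := by
        intro j
        by_cases h : 2 ≤ j.1
        · exact Or.inr (Or.inr ⟨⟨j.1 - 2, by have := j.2; omega⟩,
            by show j.1 = j.1 - 2 + 2; omega⟩)
        · omega
      have hg0 : ∀ j : Fin (2*(n+1)), j.1 = 0 → g j = u := by
        intro j hj; simp only [hg]; rw [dif_pos (by omega), if_pos hj]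
      have hg1 : ∀ j : Fin (2*(n+1)), j.1 = 1 → g j = w := by
        intro j hj; simp only [hg]; rw [dif_pos (by omega), if_neg (by omega)]
      have hg2 : ∀ (j : Fin (2*(n+1))) (k : Fin (2*n)), j.1 = k.1 + 2 → g j = f' k := by
        intro j k hj
        have h2 : ¬ (j.1 < 2) := by omega
        simp only [hg, dif_neg h2]
        congr 1
        exact Fin.ext (by show j.1 - 2 = k.1; omega)
      refine ⟨g, ?_, ?_, ?_⟩
      · rw [orthonormal_iff_ite]
        intro i j
        have hval : ∀ i : Fin (2*(n+1)), ⟪g i, g i⟫ = 1 := by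
          intro i
          rcases hcase i with hi | hi | ⟨k, hk⟩
          · rw [hg0 i hi, ← Submodule.coe_inner, real_inner_self_eq_norm_sq, hu_norm]; norm_num
          · rw [hg1 i hi, ← Submodule.coe_inner, real_inner_self_eq_norm_sq, hw_norm]; norm_num
          · rw [hg2 i k hk]
            exact (orthonormal_iff_ite.mp hon' k k).trans (if_pos rfl)
        by_cases hij : i = j
        · rw [if_pos hij, hij, hval]
        · rw [if_neg hij]
          rcases hcase i with hi | hi | ⟨k, hk⟩ <;> rcases hcase j with hj | hj | ⟨l, hl⟩
          · exact absurd (Fin.ext (hi.trans hj.symm)) hij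
          · rw [hg0 i hi, hg1 j hj, ← Submodule.coe_inner]; exact h_uw
          · rw [hg0 i hi, hg2 j l hl]; exact h_u_f' l
          · rw [hg1 i hi, hg0 j hj, ← Submodule.coe_inner, real_inner_comm]; exact h_uw
          · exact absurd (Fin.ext (hi.trans hj.symm)) hij
          · rw [hg1 i hi, hg2 j l hl]; exact h_w_f' l
          · rw [hg2 i k hk, hg0 j hj, real_inner_comm]; exact h_u_f' k
          · rw [hg2 i k hk, hg1 j hj, real_inner_comm]; exact h_w_f' k
          · rw [hg2 i k hk, hg2 j l hl]
            have hkl : k ≠ l := fun h => hij (Fin.ext (by rw [hk, hl, h]))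
            exact (orthonormal_iff_ite.mp hon' k l).trans (if_neg hkl)
      · intro i
        rcases hcase i with hi | hi | ⟨k, hk⟩
        · rw [hg0 i hi]; exact u.2
        · rw [hg1 i hi]; exact w.2
        · rw [hg2 i k hk]
          obtain ⟨y, _, hy'⟩ := hmemW' k
          rw [← hy']; exact y.2
      · intro j k hjk
        rcases hcase j with hj | hj | ⟨a, ha⟩ <;> rcases hcase k with hk | hk | ⟨b, hb⟩
        · omega
        · omega
        · rw [hg0 j hj, hg2 k b hb]; exact hA_u_f' b
        · omega
        · omega
        · rw [hg1 j hj, hg2 k b hb]; exact hA_w_f' b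
        · rw [hg2 j a ha, hg0 k hk, Abil_skew, hA_u_f' a, neg_zero]
        · rw [hg2 j a ha, hg1 k hk, Abil_skew, hA_w_f' a, neg_zero]
        · rw [hg2 j a ha, hg2 k b hb]
          exact hzero' a b (by omega)

lemma idx0_ne_idx1 {μ : ℕ} (i j : Fin μ) : idx0 i ≠ idx1 j := by
  simp only [idx0, idx1, Ne, Fin.mk.injEq]; omega

lemma idx0_inj {μ : ℕ} {i j : Fin μ} (h : idx0 i = idx0 j) : i = j := by
  simp only [idx0, Fin.mk.injEq] at h; exact Fin.ext (by omega)

lemma idx1_inj {μ : ℕ} {i j : Fin μ} (h : idx1 i = idx1 j) : i = j := by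
  simp only [idx1, Fin.mk.injEq] at h; exact Fin.ext (by omega)

def pairMap (A : AlternatingMap ℝ V ℝ (Fin 2)) (μ : ℕ) :
    MultilinearMap ℝ (fun _ : Fin (2*μ) => V) ℝ where
  toFun v := ∏ i : Fin μ, A ![v (idx0 i), v (idx1 i)]
  map_update_add' m j x y := by
    classical
    have hj2 := j.2
    set i₀ : Fin μ := ⟨j.1/2, by omega⟩ with hi₀
    have key : ∀ (z : V) (a b : V),
        (Function.update m j z (idx0 i₀) = a) → (Function.update m j z (idx1 i₀) = b) →
        (∏ i : Fin μ, A ![Function.update m j z (idx0 i), Function.update m j z (idx1 i)])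
          = A ![a, b] * ∏ i ∈ Finset.univ.erase i₀,
              A ![m (idx0 i), m (idx1 i)] := by
      intro z a b ha hb
      rw [← Finset.mul_prod_erase Finset.univ _ (Finset.mem_univ i₀), ha, hb]
      congr 1
      refine Finset.prod_congr rfl fun i hi => ?_
      have hii : i ≠ i₀ := (Finset.mem_erase.mp hi).1
      have h0 : idx0 i ≠ j := by
        intro h
        have h' : 2*i.1 = j.1 := congrArg Fin.val h
        exact hii (Fin.ext (show i.1 = j.1/2 by omega))
      have h1 : idx1 i ≠ j := by
        intro h
        have h' : 2*i.1+1 = j.1 := congrArg Fin.val h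
        exact hii (Fin.ext (show i.1 = j.1/2 by omega))
      rw [Function.update_of_ne h0, Function.update_of_ne h1]
    by_cases hpar : j.1 % 2 = 0
    · have hj0 : idx0 i₀ = j := Fin.ext (by show 2*(j.1/2) = j.1; omega)
      have hne : idx1 i₀ ≠ j := by rw [← hj0]; exact (idx0_ne_idx1 i₀ i₀).symm
      have hupd : ∀ z : V, Function.update m j z (idx1 i₀) = m (idx1 i₀) :=
        fun z => Function.update_of_ne hne _ _
      have hsame : ∀ z : V, Function.update m j z (idx0 i₀) = z := by
        intro z; rw [hj0]; exact Function.update_self _ _ _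
      rw [key (x+y) _ _ (hsame _) (hupd _), key x _ _ (hsame _) (hupd _),
        key y _ _ (hsame _) (hupd _), A_addL]
      ring
    · have hj1 : idx1 i₀ = j := Fin.ext (by show 2*(j.1/2)+1 = j.1; omega)
      have hne : idx0 i₀ ≠ j := by rw [← hj1]; exact idx0_ne_idx1 i₀ i₀
      have hupd : ∀ z : V, Function.update m j z (idx0 i₀) = m (idx0 i₀) :=
        fun z => Function.update_of_ne hne _ _
      have hsame : ∀ z : V, Function.update m j z (idx1 i₀) = z := by
        intro z; rw [hj1]; exact Function.update_self _ _ _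
      rw [key (x+y) _ _ (hupd _) (hsame _), key x _ _ (hupd _) (hsame _),
        key y _ _ (hupd _) (hsame _), A_addR]
      ring
  map_update_smul' m j c x := by
    classical
    have hj2 := j.2
    set i₀ : Fin μ := ⟨j.1/2, by omega⟩ with hi₀
    have key : ∀ (z : V) (a b : V),
        (Function.update m j z (idx0 i₀) = a) → (Function.update m j z (idx1 i₀) = b) →
        (∏ i : Fin μ, A ![Function.update m j z (idx0 i), Function.update m j z (idx1 i)])
          = A ![a, b] * ∏ i ∈ Finset.univ.erase i₀,
              A ![m (idx0 i), m (idx1 i)] := by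
      intro z a b ha hb
      rw [← Finset.mul_prod_erase Finset.univ _ (Finset.mem_univ i₀), ha, hb]
      congr 1
      refine Finset.prod_congr rfl fun i hi => ?_
      have hii : i ≠ i₀ := (Finset.mem_erase.mp hi).1
      have h0 : idx0 i ≠ j := by
        intro h
        have h' : 2*i.1 = j.1 := congrArg Fin.val h
        exact hii (Fin.ext (show i.1 = j.1/2 by omega))
      have h1 : idx1 i ≠ j := by
        intro h
        have h' : 2*i.1+1 = j.1 := congrArg Fin.val h
        exact hii (Fin.ext (show i.1 = j.1/2 by omega))
      rw [Function.update_of_ne h0, Function.update_of_ne h1]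
    by_cases hpar : j.1 % 2 = 0
    · have hj0 : idx0 i₀ = j := Fin.ext (by show 2*(j.1/2) = j.1; omega)
      have hne : idx1 i₀ ≠ j := by rw [← hj0]; exact (idx0_ne_idx1 i₀ i₀).symm
      have hupd : ∀ z : V, Function.update m j z (idx1 i₀) = m (idx1 i₀) :=
        fun z => Function.update_of_ne hne _ _
      have hsame : ∀ z : V, Function.update m j z (idx0 i₀) = z := by
        intro z; rw [hj0]; exact Function.update_self _ _ _
      rw [key (c • x) _ _ (hsame _) (hupd _), key x _ _ (hsame _) (hupd _), A_smulL]
      simp [mul_assoc]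
    · have hj1 : idx1 i₀ = j := Fin.ext (by show 2*(j.1/2)+1 = j.1; omega)
      have hne : idx0 i₀ ≠ j := by rw [← hj1]; exact idx0_ne_idx1 i₀ i₀
      have hupd : ∀ z : V, Function.update m j z (idx0 i₀) = m (idx0 i₀) :=
        fun z => Function.update_of_ne hne _ _
      have hsame : ∀ z : V, Function.update m j z (idx1 i₀) = z := by
        intro z; rw [hj1]; exact Function.update_self _ _ _
      rw [key (c • x) _ _ (hupd _) (hsame _), key x _ _ (hupd _) (hsame _), A_smulR]
      simp [mul_assoc]

@[simp] lemma pairMap_apply (A : AlternatingMap ℝ V ℝ (Fin 2)) (μ : ℕ) (v : Fin (2*μ) → V) :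
    pairMap A μ v = ∏ i : Fin μ, A ![v (idx0 i), v (idx1 i)] := rfl

def wpowAlt (A : AlternatingMap ℝ V ℝ (Fin 2)) (μ : ℕ) :
    AlternatingMap ℝ V ℝ (Fin (2*μ)) :=
  (1/2^μ : ℝ) • MultilinearMap.alternatization (pairMap A μ)

lemma wpowEval_eq_alt (A : AlternatingMap ℝ V ℝ (Fin 2)) (μ : ℕ) (v : Fin (2*μ) → V) :
    wpowEval A μ v = wpowAlt A μ v := by
  rw [wpowAlt, AlternatingMap.smul_apply, MultilinearMap.alternatization_apply, wpowEval]
  rw [smul_eq_mul]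
  congr 1
  refine Finset.sum_congr rfl fun σ _ => ?_
  rw [MultilinearMap.domDomCongr_apply, pairMap_apply]
  rcases Int.units_eq_one_or (Equiv.Perm.sign σ) with h | h <;>
    simp [h, Function.comp]

lemma abs_wpow_eq (A : AlternatingMap ℝ V ℝ (Fin 2)) (μ : ℕ) (hμ : 1 ≤ μ)
    [FiniteDimensional ℝ V]
    (v f : Fin (2*μ) → V) (hv : Orthonormal ℝ v) (hf : Orthonormal ℝ f)
    (hmem : ∀ i, f i ∈ Submodule.span ℝ (Set.range v)) :
    |wpowEval A μ v| = |wpowEval A μ f| := by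
  haveI : Nonempty (Fin (2*μ)) := ⟨⟨0, by omega⟩⟩
  set W : Submodule ℝ V := Submodule.span ℝ (Set.range v) with hWdef
  have hrank : finrank ℝ ↥W = 2*μ := by
    rw [hWdef, finrank_span_eq_card hv.linearIndependent, Fintype.card_fin]
  set vW : Fin (2*μ) → ↥W := fun i => ⟨v i, Submodule.subset_span (Set.mem_range_self i)⟩
    with hvW
  set fW : Fin (2*μ) → ↥W := fun i => ⟨f i, hmem i⟩ with hfW
  have honv : Orthonormal ℝ vW := by
    rw [orthonormal_iff_ite] at hv ⊢
    intro i j; rw [Submodule.coe_inner]; exact hv i j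
  have honf : Orthonormal ℝ fW := by
    rw [orthonormal_iff_ite] at hf ⊢
    intro i j; rw [Submodule.coe_inner]; exact hf i j
  have hcard : Fintype.card (Fin (2*μ)) = finrank ℝ ↥W := by
    rw [Fintype.card_fin, hrank]
  set bv : Basis (Fin (2*μ)) ℝ ↥W := basisOfOrthonormalOfCardEqFinrank honv hcard with hbv
  set bf : Basis (Fin (2*μ)) ℝ ↥W := basisOfOrthonormalOfCardEqFinrank honf hcard with hbf
  have hbv_coe : ⇑bv = vW := coe_basisOfOrthonormalOfCardEqFinrank _ _
  have hbf_coe : ⇑bf = fW := coe_basisOfOrthonormalOfCardEqFinrank _ _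
  set Ω : AlternatingMap ℝ ↥W ℝ (Fin (2*μ)) := (wpowAlt A μ).compLinearMap W.subtype with hΩ
  have hΩv : Ω vW = wpowEval A μ v := by
    rw [hΩ, AlternatingMap.compLinearMap_apply, wpowEval_eq_alt]; rfl
  have hΩf : Ω fW = wpowEval A μ f := by
    rw [hΩ, AlternatingMap.compLinearMap_apply, wpowEval_eq_alt]; rfl
  have hdet : |bf.det vW| = 1 := by
    have h1 : ‖(bf.toOrthonormalBasis (hbf_coe ▸ honf)).toBasis.det
        ⇑(bv.toOrthonormalBasis (hbv_coe ▸ honv))‖ = 1 :=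
      OrthonormalBasis.det_to_matrix_orthonormalBasis _ _
    rwa [Basis.toBasis_toOrthonormalBasis, Basis.coe_toOrthonormalBasis, hbv_coe,
      Real.norm_eq_abs] at h1
  have hexpand : Ω vW = Ω fW * bf.det vW := by
    conv_lhs => rw [Ω.eq_smul_basis_det bf]
    rw [AlternatingMap.smul_apply, smul_eq_mul, hbf_coe]
  rw [← hΩv, ← hΩf, hexpand, abs_mul, hdet, mul_one]

lemma idx0_ne_idx1' {μ : ℕ} (i j : Fin μ) : idx0 i ≠ idx1 j := by
  simp only [idx0, idx1, Ne, Fin.mk.injEq]; omega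

lemma valid_card_le (μ : ℕ) :
    (Finset.univ.filter (fun σ : Equiv.Perm (Fin (2*μ)) =>
      ∀ i : Fin μ, (σ (idx0 i)).1/2 = (σ (idx1 i)).1/2)).card
      ≤ 2^μ * μ.factorial := by
  classical
  set Valid := Finset.univ.filter (fun σ : Equiv.Perm (Fin (2*μ)) =>
      ∀ i : Fin μ, (σ (idx0 i)).1/2 = (σ (idx1 i)).1/2) with hV
  -- the block map
  set π : Equiv.Perm (Fin (2*μ)) → (Fin μ → Fin μ) := fun σ i =>
    ⟨(σ (idx0 i)).1/2, by have := (σ (idx0 i)).2; omega⟩ with hπ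
  set Φ : Equiv.Perm (Fin (2*μ)) → ((Fin μ ↪ Fin μ) × (Fin μ → Bool)) := fun σ =>
    (if h : Function.Injective (π σ) then ⟨π σ, h⟩ else Function.Embedding.refl _,
      fun i => decide ((σ (idx0 i)).1 % 2 = 1)) with hΦ
  have hπinj : ∀ σ ∈ Valid, Function.Injective (π σ) := by
    intro σ hσ
    rw [hV, Finset.mem_filter] at hσ
    intro a b hab
    by_contra hne
    have h1 : (σ (idx0 a)).1/2 = (σ (idx0 b)).1/2 := congrArg Fin.val hab
    have h2 : (σ (idx0 a)).1/2 = (σ (idx1 a)).1/2 := hσ.2 a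
    have h3 : (σ (idx0 b)).1/2 = (σ (idx1 b)).1/2 := hσ.2 b
    -- four distinct values in one block of size two
    have d1 : σ (idx0 a) ≠ σ (idx0 b) := fun h =>
      hne (by have := σ.injective h; simpa [idx0, Fin.mk.injEq, Fin.ext_iff] using
        congrArg Fin.val this)
    have d2 : σ (idx0 a) ≠ σ (idx1 b) := fun h => idx0_ne_idx1' a b (σ.injective h)
    have d3 : σ (idx1 a) ≠ σ (idx0 b) := fun h => idx0_ne_idx1' b a (σ.injective h).symm
    have d4 : σ (idx1 a) ≠ σ (idx1 b) := fun h =>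
      hne (by have := σ.injective h; simpa [idx1, Fin.mk.injEq, Fin.ext_iff] using
        congrArg Fin.val this)
    have e1 : (σ (idx0 a)).1 ≠ (σ (idx0 b)).1 := fun h => d1 (Fin.ext h)
    have e2 : (σ (idx0 a)).1 ≠ (σ (idx1 b)).1 := fun h => d2 (Fin.ext h)
    have e3 : (σ (idx1 a)).1 ≠ (σ (idx0 b)).1 := fun h => d3 (Fin.ext h)
    have e4 : (σ (idx1 a)).1 ≠ (σ (idx1 b)).1 := fun h => d4 (Fin.ext h)
    have e5 : (σ (idx0 a)).1 ≠ (σ (idx1 a)).1 := fun h =>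
      idx0_ne_idx1' a a (σ.injective (Fin.ext h))
    have e6 : (σ (idx0 b)).1 ≠ (σ (idx1 b)).1 := fun h =>
      idx0_ne_idx1' b b (σ.injective (Fin.ext h))
    omega
  have hinj : Set.InjOn Φ Valid := by
    intro σ hσ τ hτ heq
    have hσ' : σ ∈ Valid := hσ
    have hτ' : τ ∈ Valid := hτ
    have hπσ := hπinj σ hσ'
    have hπτ := hπinj τ hτ'
    rw [hΦ] at heq
    simp only [dif_pos hπσ, dif_pos hπτ, Prod.mk.injEq] at heq
    obtain ⟨hemb, hbool⟩ := heq
    have hπeq : π σ = π τ := congrArg (fun e => e.toFun) hemb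
    rw [hV, Finset.mem_filter] at hσ' hτ'
    have hblock : ∀ i : Fin μ, (σ (idx0 i)).1/2 = (τ (idx0 i)).1/2 := by
      intro i
      exact congrArg Fin.val (congrFun hπeq i)
    have hpar : ∀ i : Fin μ, (σ (idx0 i)).1 % 2 = (τ (idx0 i)).1 % 2 := by
      intro i
      have := congrFun hbool i
      simp only [decide_eq_decide] at this
      omega
    have h0 : ∀ i : Fin μ, σ (idx0 i) = τ (idx0 i) := by
      intro i
      exact Fin.ext (by have := hblock i; have := hpar i; omega)
    have h1 : ∀ i : Fin μ, σ (idx1 i) = τ (idx1 i) := by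
      intro i
      have hσb : (σ (idx0 i)).1/2 = (σ (idx1 i)).1/2 := hσ'.2 i
      have hτb : (τ (idx0 i)).1/2 = (τ (idx1 i)).1/2 := hτ'.2 i
      have hσne : (σ (idx0 i)).1 ≠ (σ (idx1 i)).1 := fun h =>
        idx0_ne_idx1' i i (σ.injective (Fin.ext h))
      have hτne : (τ (idx0 i)).1 ≠ (τ (idx1 i)).1 := fun h =>
        idx0_ne_idx1' i i (τ.injective (Fin.ext h))
      have hbl := hblock i
      have h00 : (σ (idx0 i)).1 = (τ (idx0 i)).1 := congrArg Fin.val (h0 i)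
      exact Fin.ext (by omega)
    apply Equiv.ext
    intro j
    have hj2 := j.2
    rcases Nat.even_or_odd j.1 with he | ho
    · have : j = idx0 ⟨j.1/2, by omega⟩ := Fin.ext (by obtain ⟨k,hk⟩ := he; show j.1 = 2*(j.1/2); omega)
      rw [this]; exact h0 _
    · have : j = idx1 ⟨j.1/2, by omega⟩ := Fin.ext (by obtain ⟨k,hk⟩ := ho; show j.1 = 2*(j.1/2)+1; omega)
      rw [this]; exact h1 _
  calc Valid.card ≤ (Finset.univ : Finset ((Fin μ ↪ Fin μ) × (Fin μ → Bool))).card :=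
        Finset.card_le_card_of_injOn Φ (fun _ _ => Finset.mem_univ _) hinj
    _ = 2^μ * μ.factorial := by
        rw [Finset.card_univ, Fintype.card_prod, Fintype.card_embedding_eq]
        simp [Nat.descFactorial_self, Fintype.card_fun, mul_comm]

lemma wpow_bound_normal (A : AlternatingMap ℝ V ℝ (Fin 2)) (μ : ℕ)
    (f : Fin (2*μ) → V)
    (hzero : ∀ j k : Fin (2*μ), j.1/2 ≠ k.1/2 → A ![f j, f k] = 0)
    (c : ℝ) (hc0 : 0 ≤ c)
    (hc : ∀ j k : Fin (2*μ), j ≠ k → |A ![f j, f k]| ≤ c) :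
    |wpowEval A μ f| ≤ (μ.factorial : ℝ) * c^μ := by
  classical
  set Valid := Finset.univ.filter (fun σ : Equiv.Perm (Fin (2*μ)) =>
      ∀ i : Fin μ, (σ (idx0 i)).1/2 = (σ (idx1 i)).1/2) with hV
  set term : Equiv.Perm (Fin (2*μ)) → ℝ := fun σ =>
    ((Equiv.Perm.sign σ : ℤ) : ℝ) * ∏ i : Fin μ, A ![f (σ (idx0 i)), f (σ (idx1 i))]
    with hterm
  have habs : ∀ σ, |term σ| = |∏ i : Fin μ, A ![f (σ (idx0 i)), f (σ (idx1 i))]| := by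
    intro σ
    rw [hterm]
    simp only [abs_mul]
    rcases Int.units_eq_one_or (Equiv.Perm.sign σ) with h | h <;> rw [h] <;> norm_num
  have hterm0 : ∀ σ ∉ Valid, |term σ| = 0 := by
    intro σ hσ
    rw [hV, Finset.mem_filter] at hσ
    push_neg at hσ
    obtain ⟨i, hi⟩ := hσ (Finset.mem_univ σ)
    rw [habs, abs_eq_zero]
    exact Finset.prod_eq_zero (Finset.mem_univ i) (hzero _ _ hi)
  have htermle : ∀ σ, |term σ| ≤ c^μ := by
    intro σ
    rw [habs, Finset.abs_prod]
    calc ∏ i : Fin μ, |A ![f (σ (idx0 i)), f (σ (idx1 i))]|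
        ≤ ∏ _i : Fin μ, c := by
          refine Finset.prod_le_prod (fun i _ => abs_nonneg _) (fun i _ => ?_)
          refine hc _ _ (fun h => ?_)
          have : idx0 i = idx1 i := σ.injective h
          simp only [idx0, idx1, Fin.mk.injEq] at this
          omega
      _ = c^μ := by rw [Finset.prod_const, Finset.card_univ, Fintype.card_fin]
  have hsum : |∑ σ : Equiv.Perm (Fin (2*μ)), term σ| ≤ (2^μ * μ.factorial : ℝ) * c^μ := by
    calc |∑ σ : Equiv.Perm (Fin (2*μ)), term σ|
        ≤ ∑ σ : Equiv.Perm (Fin (2*μ)), |term σ| := Finset.abs_sum_le_sum_abs _ _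
      _ = ∑ σ ∈ Valid, |term σ| := by
          rw [← Finset.sum_filter_add_sum_filter_not Finset.univ
            (fun σ : Equiv.Perm (Fin (2*μ)) =>
              ∀ i : Fin μ, (σ (idx0 i)).1/2 = (σ (idx1 i)).1/2) (fun σ => |term σ|)]
          rw [← hV]
          have : ∑ σ ∈ Finset.univ.filter (fun σ : Equiv.Perm (Fin (2*μ)) =>
              ¬ ∀ i : Fin μ, (σ (idx0 i)).1/2 = (σ (idx1 i)).1/2), |term σ| = 0 := by
            refine Finset.sum_eq_zero fun σ hσ => ?_
            refine hterm0 σ ?_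
            rw [hV, Finset.mem_filter]
            rw [Finset.mem_filter] at hσ
            tauto
          rw [this, add_zero]
      _ ≤ Valid.card • c^μ := Finset.sum_le_card_nsmul _ _ _ (fun σ _ => htermle σ)
      _ = (Valid.card : ℝ) * c^μ := by rw [nsmul_eq_mul]
      _ ≤ (2^μ * μ.factorial : ℝ) * c^μ := by
          refine mul_le_mul_of_nonneg_right ?_ (pow_nonneg hc0 μ)
          have := valid_card_le μ
          rw [← hV] at this
          exact_mod_cast this
  have h2pos : (0:ℝ) < 2^μ := by positivity
  calc |wpowEval A μ f| = (1/2^μ) * |∑ σ : Equiv.Perm (Fin (2*μ)), term σ| := by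
        rw [wpowEval, abs_mul, abs_of_pos (by positivity : (0:ℝ) < 1/2^μ)]
    _ ≤ (1/2^μ) * ((2^μ * μ.factorial : ℝ) * c^μ) :=
        mul_le_mul_of_nonneg_left hsum (by positivity)
    _ = (μ.factorial : ℝ) * c^μ := by field_simp

lemma exists_bound [FiniteDimensional ℝ V] (A : AlternatingMap ℝ V ℝ (Fin 2)) :
    ∃ C : ℝ, ∀ x y : V, ‖x‖ ≤ 1 → ‖y‖ ≤ 1 → |A ![x,y]| ≤ C := by
  set b := stdOrthonormalBasis ℝ V
  refine ⟨∑ i, ∑ j, |A ![b i, b j]|, fun x y hx hy => ?_⟩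
  have h1 : ∀ z : V, Abil A z y = ∑ j, ⟪b j, y⟫ * Abil A z (b j) := fun z => by
    conv_lhs => rw [← b.sum_repr' y]
    rw [map_sum]
    exact Finset.sum_congr rfl fun j _ => by rw [LinearMap.map_smul, smul_eq_mul]
  have h2 : A ![x,y] = ∑ i, ∑ j, (⟪b i, x⟫ * ⟪b j, y⟫) * A ![b i, b j] := by
    rw [← Abil_apply]
    conv_lhs => rw [← b.sum_repr' x]
    rw [map_sum, LinearMap.sum_apply]
    refine Finset.sum_congr rfl fun i _ => ?_
    rw [LinearMap.map_smul, LinearMap.smul_apply, smul_eq_mul, h1]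
    rw [Finset.mul_sum]
    exact Finset.sum_congr rfl fun j _ => by rw [Abil_apply]; ring
  rw [h2]
  refine (Finset.abs_sum_le_sum_abs _ _).trans ?_
  refine Finset.sum_le_sum fun i _ => (Finset.abs_sum_le_sum_abs _ _).trans ?_
  refine Finset.sum_le_sum fun j _ => ?_
  rw [abs_mul, abs_mul]
  have hbi : |⟪b i, x⟫| ≤ 1 := by
    calc |⟪b i, x⟫| ≤ ‖b i‖ * ‖x‖ := abs_real_inner_le_norm _ _
    _ ≤ 1 := by rw [b.orthonormal.1 i, one_mul]; exact hx
  have hbj : |⟪b j, y⟫| ≤ 1 := by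
    calc |⟪b j, y⟫| ≤ ‖b j‖ * ‖y‖ := abs_real_inner_le_norm _ _
    _ ≤ 1 := by rw [b.orthonormal.1 j, one_mul]; exact hy
  calc |⟪b i, x⟫| * |⟪b j, y⟫| * |A ![b i, b j]|
      ≤ 1 * |A ![b i, b j]| :=
        mul_le_mul_of_nonneg_right
          (mul_le_one₀ hbi (abs_nonneg _) hbj) (abs_nonneg _)
    _ = _ := one_mul _

lemma bddAbove_comass2_set [FiniteDimensional ℝ V] (A : AlternatingMap ℝ V ℝ (Fin 2)) :
    BddAbove {x : ℝ | ∃ v : Fin 2 → V, Orthonormal ℝ v ∧ x = A v} := by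
  obtain ⟨C, hC⟩ := exists_bound A
  refine ⟨C, fun x hx => ?_⟩
  obtain ⟨v, hv, rfl⟩ := hx
  calc A v ≤ |A v| := le_abs_self _
    _ = |A ![v 0, v 1]| := by rw [vec2_eta]
    _ ≤ C := hC _ _ (le_of_eq (hv.1 0)) (le_of_eq (hv.1 1))

lemma abs_le_comass2 [FiniteDimensional ℝ V] (A : AlternatingMap ℝ V ℝ (Fin 2))
    {x y : V} (h : Orthonormal ℝ ![x,y]) : |A ![x,y]| ≤ comass2 A := by
  have hx : ‖x‖ = 1 := by simpa using h.1 0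
  have hy : ‖y‖ = 1 := by simpa using h.1 1
  have hxy : ⟪x, y⟫ = 0 := by simpa using h.2 (by decide : (0 : Fin 2) ≠ 1)
  have hswap : Orthonormal ℝ ![y,x] :=
    orthonormal_pair hy hx (by rw [real_inner_comm]; exact hxy)
  have h1 : A ![x,y] ≤ comass2 A :=
    le_csSup (bddAbove_comass2_set A) ⟨![x,y], h, rfl⟩
  have h2 : A ![y,x] ≤ comass2 A :=
    le_csSup (bddAbove_comass2_set A) ⟨![y,x], hswap, rfl⟩
  rw [Abil_skew] at h2
  exact abs_le.2 ⟨by linarith, h1⟩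

lemma comass2_nonneg [FiniteDimensional ℝ V] (A : AlternatingMap ℝ V ℝ (Fin 2))
    {x y : V} (h : Orthonormal ℝ ![x,y]) : 0 ≤ comass2 A :=
  (abs_nonneg _).trans (abs_le_comass2 A h)

/-- for every real alternating 2-form `A` on a finite-dimensional
Euclidean space and every `μ ≥ 1`, the comass satisfies `‖A^μ‖ ≤ μ!·‖A‖^μ`. -/
theorem stmt_3 [FiniteDimensional ℝ V] (A : AlternatingMap ℝ V ℝ (Fin 2))
    (μ : ℕ) (hμ : 1 ≤ μ) :
    comassPow A μ ≤ (μ.factorial : ℝ) * (comass2 A)^μ := by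
  refine Real.sSup_le ?_ ?_
  · rintro x ⟨v, hv, rfl⟩
    -- an orthonormal pair exists, so comass2 A ≥ 0
    have h01 : (⟨0, by omega⟩ : Fin (2*μ)) ≠ ⟨1, by omega⟩ := by
      simp [Fin.ext_iff]
    have hpair : Orthonormal ℝ ![v ⟨0, by omega⟩, v ⟨1, by omega⟩] :=
      orthonormal_pair (hv.1 _) (hv.1 _) (hv.2 h01)
    have hc0 : 0 ≤ comass2 A := comass2_nonneg A hpair
    -- normal form on the span of v
    have hrank : finrank ℝ ↥(Submodule.span ℝ (Set.range v)) = 2*μ := by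
      rw [finrank_span_eq_card hv.linearIndependent, Fintype.card_fin]
    obtain ⟨f, hf, hfmem, hfzero⟩ := normalForm A μ _ hrank
    have hfc : ∀ j k : Fin (2*μ), j ≠ k → |A ![f j, f k]| ≤ comass2 A := by
      intro j k hjk
      exact abs_le_comass2 A (orthonormal_pair (hf.1 j) (hf.1 k) (hf.2 hjk))
    calc wpowEval A μ v ≤ |wpowEval A μ v| := le_abs_self _
      _ = |wpowEval A μ f| := abs_wpow_eq A μ hμ v f hv hf hfmem
      _ ≤ (μ.factorial : ℝ) * (comass2 A)^μ :=
          wpow_bound_normal A μ f hfzero _ hc0 hfc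
  · by_cases hex : ∃ x y : V, Orthonormal ℝ ![x,y]
    · obtain ⟨x, y, hxy⟩ := hex
      exact mul_nonneg (Nat.cast_nonneg _) (pow_nonneg (comass2_nonneg A hxy) μ)
    · have hempty : {x : ℝ | ∃ v : Fin 2 → V, Orthonormal ℝ v ∧ x = A v} = ∅ := by
        ext z
        simp only [Set.mem_setOf_eq, Set.mem_empty_iff_false, iff_false]
        rintro ⟨v, hv, rfl⟩
        exact hex ⟨v 0, v 1, by rw [vec2_eta]; exact hv⟩
      rw [comass2, hempty, Real.sSup_empty, zero_pow (by omega : μ ≠ 0), mul_zero]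
end
end

section
/- Let ω₁,…,ω_{2μ} be the dual basis of an orthonormal basis of a 2μ-dimensional Euclidean space, and let λ₁,…,λ_μ be real numbers. Then the comass of the 2-form f = Σ_j λ_j · ω_{2j-1} ∧ ω_{2j} equals max_j |λ_j|. -/
/-!
Write `f = Σ_j λ_j e_j^♭ ∧ f_j^♭` for an orthonormal family `e₁, f₁, …, e_μ, f_μ`. On a pair
`(v, w)` the `j`-th block contributes `λ_j` times a 2×2 determinant, which by Cauchy–Schwarz is at
most `√(⟪e_j,v⟫² + ⟪f_j,v⟫²) · √(⟪e_j,w⟫² + ⟪f_j,w⟫²)`; Cauchy–Schwarz once more and Bessel's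
inequality bound the sum of these by `‖v‖ ‖w‖`, so `f(v, w) ≤ max_j |λ_j|` on unit vectors. The
value `|λ_i|` is attained at `(e_i, f_i)` or `(f_i, e_i)`.
-/

noncomputable section
open scoped BigOperators

lemma abs_mul_sub_mul_le_sqrt_mul_sqrt (p q r s : ℝ) :
    |p * s - r * q| ≤ √(p ^ 2 + q ^ 2) * √(r ^ 2 + s ^ 2) := by
  rw [← Real.sqrt_mul (by positivity), ← Real.sqrt_sq_eq_abs]
  apply Real.sqrt_le_sqrt
  nlinarith [sq_nonneg (p * r + q * s)]

section PairedTwoForm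

variable {ι V : Type*} [Fintype ι] [NormedAddCommGroup V] [InnerProductSpace ℝ V]

def pairedTwoForm (e f : ι → V) (lam : ι → ℝ) (v w : V) : ℝ :=
  ∑ j, lam j * (inner ℝ (e j) v * inner ℝ (f j) w - inner ℝ (e j) w * inner ℝ (f j) v)

lemma pairedTwoForm_swap (e f : ι → V) (lam : ι → ℝ) (v w : V) :
    pairedTwoForm e f lam w v = -pairedTwoForm e f lam v w := by
  simp only [pairedTwoForm, ← Finset.sum_neg_distrib]
  exact Finset.sum_congr rfl fun j _ => by ring

variable {e f : ι → V}

lemma pairedTwoForm_apply_self (h : Orthonormal ℝ (Sum.elim e f)) (lam : ι → ℝ) (i : ι) :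
    pairedTwoForm e f lam (e i) (f i) = lam i := by
  classical
  have he : ∀ j, inner ℝ (e j) (e i) = if j = i then (1 : ℝ) else 0 := fun j =>
    orthonormal_iff_ite.mp (h.comp _ Sum.inl_injective) j i
  have hf : ∀ j, inner ℝ (f j) (f i) = if j = i then (1 : ℝ) else 0 := fun j =>
    orthonormal_iff_ite.mp (h.comp _ Sum.inr_injective) j i
  have hef : ∀ j, inner ℝ (e j) (f i) = (0 : ℝ) := fun j => h.2 Sum.inl_ne_inr
  simp [pairedTwoForm, he, hf, hef]

lemma exists_orthonormal_pairedTwoForm_eq_abs (h : Orthonormal ℝ (Sum.elim e f))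
    (lam : ι → ℝ) (i : ι) :
    ∃ v w : V, ‖v‖ = 1 ∧ ‖w‖ = 1 ∧ inner ℝ v w = (0 : ℝ) ∧
      |lam i| = pairedTwoForm e f lam v w := by
  have hv : ‖e i‖ = 1 := h.1 (Sum.inl i)
  have hw : ‖f i‖ = 1 := h.1 (Sum.inr i)
  have hvw : inner ℝ (e i) (f i) = (0 : ℝ) := h.2 Sum.inl_ne_inr
  rcases le_or_gt 0 (lam i) with hi | hi
  · exact ⟨e i, f i, hv, hw, hvw, by rw [pairedTwoForm_apply_self h, abs_of_nonneg hi]⟩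
  · refine ⟨f i, e i, hw, hv, by rwa [real_inner_comm], ?_⟩
    rw [pairedTwoForm_swap, pairedTwoForm_apply_self h, abs_of_neg hi]

lemma sum_abs_det_inner_le (h : Orthonormal ℝ (Sum.elim e f)) (v w : V) :
    ∑ j, |inner ℝ (e j) v * inner ℝ (f j) w - inner ℝ (e j) w * inner ℝ (f j) v| ≤
      ‖v‖ * ‖w‖ := by
  have bessel : ∀ x : V, ∑ j, (inner ℝ (e j) x ^ 2 + inner ℝ (f j) x ^ 2) ≤ ‖x‖ ^ 2 := by
    intro x
    have := h.sum_inner_products_le (x := x) (s := Finset.univ)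
    simpa [Fintype.sum_sum_type, Finset.sum_add_distrib] using this
  calc ∑ j, |inner ℝ (e j) v * inner ℝ (f j) w - inner ℝ (e j) w * inner ℝ (f j) v|
      ≤ ∑ j, √(inner ℝ (e j) v ^ 2 + inner ℝ (f j) v ^ 2) *
          √(inner ℝ (e j) w ^ 2 + inner ℝ (f j) w ^ 2) :=
        Finset.sum_le_sum fun j _ => abs_mul_sub_mul_le_sqrt_mul_sqrt _ _ _ _
    _ ≤ √(∑ j, (inner ℝ (e j) v ^ 2 + inner ℝ (f j) v ^ 2)) *
          √(∑ j, (inner ℝ (e j) w ^ 2 + inner ℝ (f j) w ^ 2)) :=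
        Real.sum_sqrt_mul_sqrt_le _ (fun _ => by positivity) (fun _ => by positivity)
    _ ≤ √(‖v‖ ^ 2) * √(‖w‖ ^ 2) := by gcongr <;> exact bessel _
    _ = ‖v‖ * ‖w‖ := by rw [Real.sqrt_sq (norm_nonneg v), Real.sqrt_sq (norm_nonneg w)]

lemma pairedTwoForm_le (h : Orthonormal ℝ (Sum.elim e f)) {lam : ι → ℝ} {M : ℝ}
    (hM0 : 0 ≤ M) (hM : ∀ j, |lam j| ≤ M) (v w : V) :
    pairedTwoForm e f lam v w ≤ M * (‖v‖ * ‖w‖) :=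
  calc pairedTwoForm e f lam v w
      ≤ ∑ j, |lam j| *
          |inner ℝ (e j) v * inner ℝ (f j) w - inner ℝ (e j) w * inner ℝ (f j) v| :=
        Finset.sum_le_sum fun j _ => (le_abs_self _).trans (abs_mul _ _).le
    _ ≤ ∑ j, M * |inner ℝ (e j) v * inner ℝ (f j) w - inner ℝ (e j) w * inner ℝ (f j) v| :=
        Finset.sum_le_sum fun j _ => mul_le_mul_of_nonneg_right (hM j) (abs_nonneg _)
    _ ≤ M * (‖v‖ * ‖w‖) := by
        rw [← Finset.mul_sum]
        exact mul_le_mul_of_nonneg_left (sum_abs_det_inner_le h v w) hM0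

end PairedTwoForm

lemma sumElim_idx0_idx1_injective (μ : ℕ) :
    Function.Injective (Sum.elim idx0 idx1 : Fin μ ⊕ Fin μ → Fin (2 * μ)) :=
  Function.Injective.sumElim
    (fun i j h => by simp only [idx0, Fin.ext_iff] at h ⊢; omega)
    (fun i j h => by simp only [idx1, Fin.ext_iff] at h ⊢; omega)
    (fun i j h => by simp only [idx0, idx1, Fin.ext_iff] at h; omega)

/-- for an orthonormal basis `e` of a `2μ`-dimensional Euclidean space
with dual basis `ω_i = ⟪e_i, ·⟫` and reals `λ₁, …, λ_μ`, the comass of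
`f = Σ_j λ_j · ω_{2j-1} ∧ ω_{2j}` (the supremum of its values on orthonormal pairs,
which is attained) equals `max_j |λ_j|`. -/
theorem stmt_5 {V : Type*} [NormedAddCommGroup V] [InnerProductSpace ℝ V]
    (μ : ℕ) (hμ : 0 < μ) (b : OrthonormalBasis (Fin (2*μ)) ℝ V)
    (lam : Fin μ → ℝ) :
    IsGreatest {x : ℝ | ∃ v w : V, ‖v‖ = 1 ∧ ‖w‖ = 1 ∧ (inner ℝ v w : ℝ) = 0 ∧
        x = ∑ j : Fin μ, lam j *
          ((inner ℝ (b (idx0 j)) v : ℝ) * (inner ℝ (b (idx1 j)) w : ℝ)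
            - (inner ℝ (b (idx0 j)) w : ℝ) * (inner ℝ (b (idx1 j)) v : ℝ))}
      (Finset.univ.sup'
        (Finset.univ_nonempty_iff.mpr (Fin.pos_iff_nonempty.mp hμ))
        fun j => |lam j|) := by
  have hb : Orthonormal ℝ (Sum.elim (b ∘ idx0) (b ∘ idx1)) := by
    rw [← Sum.comp_elim]
    exact b.orthonormal.comp _ (sumElim_idx0_idx1_injective μ)
  have hM : ∀ j, |lam j| ≤ Finset.univ.sup' _ fun j => |lam j| := fun j =>
    Finset.le_sup' (fun j => |lam j|) (Finset.mem_univ j)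
  constructor
  · obtain ⟨i, -, hi⟩ := Finset.exists_mem_eq_sup' _ fun j => |lam j|
    rw [hi]
    exact exists_orthonormal_pairedTwoForm_eq_abs hb lam i
  · rintro x ⟨v, w, hv, hw, -, rfl⟩
    have := pairedTwoForm_le hb ((abs_nonneg _).trans (hM ⟨0, hμ⟩)) hM v w
    rwa [hv, hw, mul_one, mul_one] at this
end
end
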